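/- Let A be the adjacency matrix of WS(n,k,β) with identity permutation. Then with probability at least 1 - 1/n, ⟨B, A⟩ ≥ (1 - β + β²k/(n-1))·nk - √(nk·log n). -/

import Mathlib

open MeasureTheory ProbabilityTheory Real

/-- Ring distance between two nodes on the cycle `Z/nZ`. -/
def ringDist (n : ℕ) (i j : Fin n) : ℕ :=
  min ((i.val + n - j.val) % n) ((j.val + n - i.val) % n)

/-- Adjacency matrix of the ring lattice on `n` nodes with neighborhood size `k`. -/
def ringLattice (n k : ℕ) : Matrix (Fin n) (Fin n) ℝ :=
  Matrix.of fun i j => if 1 ≤ ringDist n i j ∧ ringDist n i j ≤ k / 2 then 1 else 0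

/-!
Summing over the `nk/2` lattice pairs `i < j`, the statistic `⟨B, A⟩` is twice a sum of
`nk/2` independent `[0,1]`-valued variables, each with mean `p = 1 - β + β²k/(n-1)`.
Hoeffding's inequality bounds the probability that this sum falls below its mean
`p·nk/2` by more than `√(nk·log n)/2` by `exp(-2 (nk·log n/4) / (nk/2)) = 1/n`.
-/

open Finset

theorem Matrix.sum_sum_eq_two_mul_sum_lt {ι R : Type*} [Fintype ι] [LinearOrder ι] [Semiring R]
    (M : Matrix ι ι R) (hM : M.IsSymm) (hdiag : ∀ i, M i i = 0) :
    ∑ i, ∑ j, M i j = 2 * ∑ e : {q : ι × ι // q.1 < q.2}, M e.1.1 e.1.2 := by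
  classical
  have hsplit : ∀ i j, M i j = (if i < j then M i j else 0) + (if j < i then M i j else 0) := by
    intro i j
    rcases lt_trichotomy i j with h | rfl | h
    · simp [h, h.not_gt]
    · simp [hdiag]
    · simp [h, h.not_gt]
  have hswap :
      ∑ i, ∑ j, (if j < i then M i j else 0) = ∑ i, ∑ j, (if i < j then M i j else 0) := by
    rw [sum_comm]
    simp_rw [hM.apply]
  have hsubtype : ∑ e : {q : ι × ι // q.1 < q.2}, M e.1.1 e.1.2 =
      ∑ i, ∑ j, (if i < j then M i j else 0) := by
    rw [← sum_subtype (p := fun q : ι × ι => q.1 < q.2) (univ.filter fun q => q.1 < q.2)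
      (by simp) (fun q => M q.1 q.2), sum_filter, ← Fintype.sum_prod_type']
  rw [hsubtype, two_mul]
  nth_rewrite 2 [← hswap]
  simp only [← sum_add_distrib, ← hsplit]

section RingLattice

variable {n k : ℕ}

theorem ringDist_eq_min_val_sub (i j : Fin n) :
    ringDist n i j = min (i - j).val (j - i).val := by
  simp only [ringDist, Fin.val_sub]
  rw [show i.val + n - j.val = n - j.val + i.val by omega,
    show j.val + n - i.val = n - i.val + j.val by omega]

theorem ringDist_comm (i j : Fin n) : ringDist n i j = ringDist n j i :=
  min_comm _ _

theorem ringLattice_isSymm : (ringLattice n k).IsSymm :=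
  Matrix.IsSymm.ext fun i j => by simp only [ringLattice, Matrix.of_apply, ringDist_comm j i]

theorem ringLattice_apply_self (i : Fin n) : ringLattice n k i i = 0 := by
  simp [ringLattice, ringDist]

theorem ringLattice_eq_zero_or_eq_one (i j : Fin n) :
    ringLattice n k i j = 0 ∨ ringLattice n k i j = 1 := by
  simp only [ringLattice, Matrix.of_apply]
  split_ifs <;> simp

theorem sum_ringLattice_row (hkn : k < n) (hke : Even k) (i : Fin n) :
    ∑ j, ringLattice n k i j = k := by
  classical
  have : NeZero n := ⟨i.pos.ne'⟩
  have hk2 := Nat.even_iff.mp hke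
  set inBand : ℕ → Prop := fun d => 1 ≤ d ∧ d ≤ k / 2
  -- only the offset `o = j - i` matters, and its circular distance is `min (n - o) o`
  have hshift : ∑ j, ringLattice n k i j =
      ∑ o ∈ range n, if inBand (min ((n - o) % n) o) then (1 : ℝ) else 0 := by
    rw [← Fin.sum_univ_eq_sum_range
      (fun o => if inBand (min ((n - o) % n) o) then (1 : ℝ) else 0)]
    refine Fintype.sum_equiv (Equiv.subRight i) _ _ fun j => ?_
    rw [ringLattice, Matrix.of_apply, ringDist_eq_min_val_sub, ← neg_sub j i, Fin.val_neg']
    rfl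
  have hband : (range n).filter (fun o => inBand (min ((n - o) % n) o)) =
      Ico 1 (k / 2 + 1) ∪ Ico (n - k / 2) n := by
    ext o
    simp only [mem_filter, mem_range, mem_union, mem_Ico, inBand]
    rcases Nat.eq_zero_or_pos o with rfl | ho
    · simp only [Nat.sub_zero, Nat.mod_self, min_self]
      omega
    · rw [Nat.mod_eq_of_lt (by omega : n - o < n)]
      omega
  have hdisj : Disjoint (Ico 1 (k / 2 + 1)) (Ico (n - k / 2) n) :=
    disjoint_left.mpr fun o h1 h2 => by simp only [mem_Ico] at h1 h2; omega
  rw [hshift, sum_boole, hband, card_union_of_disjoint hdisj, Nat.card_Ico, Nat.card_Ico]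
  exact_mod_cast (by omega : k / 2 + 1 - 1 + (n - (n - k / 2)) = k)

end RingLattice

section LatticeEdges

variable (n k : ℕ)

noncomputable def latticeEdges : Finset {q : Fin n × Fin n // q.1 < q.2} :=
  univ.filter fun e => ringLattice n k e.1.1 e.1.2 = 1

variable {n k}

theorem sum_ringLattice_mul_eq_two_mul_sum_latticeEdges (A : Matrix (Fin n) (Fin n) ℝ)
    (hA : A.IsSymm) :
    ∑ i, ∑ j, ringLattice n k i j * A i j = 2 * ∑ e ∈ latticeEdges n k, A e.1.1 e.1.2 := by
  classical
  have hsymm : (Matrix.of fun i j => ringLattice n k i j * A i j).IsSymm :=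
    Matrix.IsSymm.ext fun i j => by simp only [Matrix.of_apply, ringLattice_isSymm.apply, hA.apply]
  have := Matrix.sum_sum_eq_two_mul_sum_lt _ hsymm fun i => by simp [ringLattice_apply_self]
  simp only [Matrix.of_apply] at this
  rw [this, latticeEdges, sum_filter]
  congr 1
  refine sum_congr rfl fun e _ => ?_
  rcases ringLattice_eq_zero_or_eq_one (k := k) e.1.1 e.1.2 with h | h <;> simp [h]

theorem two_mul_card_latticeEdges (hkn : k < n) (hke : Even k) :
    2 * #(latticeEdges n k) = n * k := by
  have := sum_ringLattice_mul_eq_two_mul_sum_latticeEdges (n := n) (k := k)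
    (Matrix.of fun _ _ => (1 : ℝ)) (Matrix.IsSymm.ext fun _ _ => rfl)
  simp only [Matrix.of_apply, mul_one, sum_ringLattice_row hkn hke, sum_const, card_univ,
    Fintype.card_fin, nsmul_eq_mul] at this
  exact_mod_cast this.symm

end LatticeEdges

section Probability

variable {Ω : Type*} [MeasurableSpace Ω] {μ : Measure Ω}

theorem integral_eq_measureReal_of_eq_zero_or_eq_one {X : Ω → ℝ} (hX : Measurable X)
    (h01 : ∀ ω, X ω = 0 ∨ X ω = 1) : μ[X] = μ.real {ω | X ω = 1} := by
  have hX_eq : X = {ω | X ω = 1}.indicator 1 :=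
    funext fun ω => by rcases h01 ω with h | h <;> simp [h]
  nth_rewrite 1 [hX_eq]
  exact integral_indicator_one (hX (measurableSet_singleton 1))

theorem measureReal_sum_le_sum_integral_sub_le [IsProbabilityMeasure μ] {ι : Type*}
    {X : ι → Ω → ℝ} (hindep : iIndepFun X μ) {s : Finset ι}
    (hmeas : ∀ i ∈ s, AEMeasurable (X i) μ)
    (hbdd : ∀ i ∈ s, ∀ᵐ ω ∂μ, X i ω ∈ Set.Icc (0 : ℝ) 1)
    {ε : ℝ} (hε : 0 ≤ ε) :
    μ.real {ω | ∑ i ∈ s, X i ω ≤ ∑ i ∈ s, μ[X i] - ε} ≤ exp (-2 * ε ^ 2 / #s) := by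
  have hsubG : ∀ i ∈ s, HasSubgaussianMGF (fun ω => μ[X i] - X i ω) (1 / 4) μ := by
    intro i hi
    have := (hasSubgaussianMGF_of_mem_Icc (hmeas i hi) (hbdd i hi)).neg
    convert this using 1
    · ext ω; simp
    · norm_num
  have hindep' : iIndepFun (fun i ω => μ[X i] - X i ω) μ :=
    hindep.comp (fun i (y : ℝ) => (∫ x, X i x ∂μ) - y) fun i => by fun_prop
  have hset : {ω | ∑ i ∈ s, X i ω ≤ ∑ i ∈ s, μ[X i] - ε} =
      {ω | ε ≤ ∑ i ∈ s, (μ[X i] - X i ω)} := by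
    ext ω
    simp only [Set.mem_ofPred_eq, sum_sub_distrib]
    constructor <;> intro h <;> linarith
  rw [hset]
  convert HasSubgaussianMGF.measure_sum_ge_le_of_iIndepFun hindep' hsubG hε using 2
  push_cast
  rw [sum_const, nsmul_eq_mul]
  ring

theorem measureReal_sum_le_sum_integral_sub_sqrt_le [IsProbabilityMeasure μ] {ι : Type*}
    {X : ι → Ω → ℝ} (hindep : iIndepFun X μ) {s : Finset ι} (hs : s.Nonempty)
    (hmeas : ∀ i ∈ s, AEMeasurable (X i) μ)
    (hbdd : ∀ i ∈ s, ∀ᵐ ω ∂μ, X i ω ∈ Set.Icc (0 : ℝ) 1)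
    {t : ℝ} (ht : 1 ≤ t) :
    μ.real {ω | ∑ i ∈ s, X i ω ≤ ∑ i ∈ s, μ[X i] - √(#s * log t / 2)} ≤ t⁻¹ := by
  have hs' : (0 : ℝ) < #s := by exact_mod_cast hs.card_pos
  have hvar : 0 ≤ #s * log t / 2 := div_nonneg (mul_nonneg hs'.le (log_nonneg ht)) zero_le_two
  convert measureReal_sum_le_sum_integral_sub_le hindep hmeas hbdd (sqrt_nonneg _) using 1
  rw [sq_sqrt hvar, show -2 * (#s * log t / 2) / #s = -log t by field_simp, exp_neg,
    exp_log (by linarith)]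

theorem ofReal_one_sub_le_of_measureReal_compl_le [IsProbabilityMeasure μ] {s : Set Ω} {δ : ℝ}
    (h : μ.real sᶜ ≤ δ) : ENNReal.ofReal (1 - δ) ≤ μ s := by
  rw [← ofReal_measureReal]
  apply ENNReal.ofReal_le_ofReal
  have := measureReal_union_le (μ := μ) s sᶜ
  rw [Set.union_compl_self, probReal_univ] at this
  linarith

end Probability

theorem maxlik_statistic_signal_bound_general {Ω : Type*} [MeasurableSpace Ω] (μ : Measure Ω)
    [IsProbabilityMeasure μ] (n k : ℕ) (hk : 0 < k) (hkn : k < n)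
    (hke : Even k) (β : ℝ) (hβ1 : β ≤ 1)
    (A : Ω → Matrix (Fin n) (Fin n) ℝ)
    (hmeas : ∀ i j, Measurable fun ω => A ω i j)
    (hsymm : ∀ ω, (A ω).IsSymm)
    (h01 : ∀ ω i j, A ω i j = 0 ∨ A ω i j = 1)
    (hlattice : ∀ i j : Fin n, i < j → ringLattice n k i j = 1 →
      μ {ω | A ω i j = 1} = ENNReal.ofReal (1 - β + β ^ 2 * k / (n - 1)))
    (hindep : iIndepFun
      (fun (e : {q : Fin n × Fin n // q.1 < q.2}) ω => A ω e.1.1 e.1.2) μ) :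
    ENNReal.ofReal (1 - 1 / (n : ℝ)) ≤
      μ {ω | (1 - β + β ^ 2 * k / (n - 1)) * n * k -
            Real.sqrt ((n : ℝ) * k * Real.log n) ≤
          ∑ i : Fin n, ∑ j : Fin n, ringLattice n k i j * A ω i j} := by
  set p := 1 - β + β ^ 2 * k / (n - 1)
  have hn : (1 : ℝ) ≤ n := by exact_mod_cast hk.trans hkn
  have hp : 0 ≤ p := by
    have : 0 ≤ β ^ 2 * k / (n - 1) := div_nonneg (by positivity) (by linarith)
    linarith
  have hE : (latticeEdges n k).Nonempty := by
    have := two_mul_card_latticeEdges hkn hke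
    have := Nat.mul_pos (hk.trans hkn) hk
    exact card_pos.mp (by omega)
  have hcard : 2 * (#(latticeEdges n k) : ℝ) = n * k := by
    exact_mod_cast two_mul_card_latticeEdges hkn hke
  set E := latticeEdges n k
  have hmean : ∑ e ∈ E, μ[fun ω => A ω e.1.1 e.1.2] = #E * p := by
    rw [← nsmul_eq_mul, ← sum_const]
    refine sum_congr rfl fun e he => ?_
    rw [integral_eq_measureReal_of_eq_zero_or_eq_one (hmeas _ _) (fun ω => h01 ω _ _),
      measureReal_def, hlattice _ _ e.2 (mem_filter.mp he).2, ENNReal.toReal_ofReal hp]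
  have hsqrt : √(n * k * log n) = 2 * √(#E * log n / 2) := by
    rw [← hcard, show 2 * #E * log n = 2 ^ 2 * (#E * log n / 2) by ring,
      sqrt_mul (by norm_num), sqrt_sq zero_le_two]
  have htail := measureReal_sum_le_sum_integral_sub_sqrt_le hindep hE
    (fun _ _ => (hmeas _ _).aemeasurable)
    (fun e _ => ae_of_all _ fun ω => by rcases h01 ω e.1.1 e.1.2 with h | h <;> simp [h])
    (t := n) hn
  rw [← inv_eq_one_div]
  refine ofReal_one_sub_le_of_measureReal_compl_le
    ((measureReal_mono fun ω hω => ?_).trans htail)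
  simp only [Set.mem_compl_iff, Set.mem_ofPred_eq, not_le,
    sum_ringLattice_mul_eq_two_mul_sum_latticeEdges _ (hsymm ω)] at hω ⊢
  rw [hmean]
  rw [hsqrt, show p * n * k = 2 * (#E * p) by rw [mul_assoc, ← hcard]; ring] at hω
  linarith

/-- For the Watts–Strogatz random adjacency matrix `A ~ WS(n,k,β)` with identity
permutation, with probability at least `1 - 1/n`,
`⟨B, A⟩ ≥ (1 - β + β²k/(n-1))·nk - √(nk·log n)`. -/
theorem maxlik_statistic_signal_bound {Ω : Type*} [MeasurableSpace Ω] (μ : Measure Ω)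
    [IsProbabilityMeasure μ] (n k : ℕ) (hn : 2 ≤ n) (hk : 0 < k) (hkn : k < n)
    (hke : Even k) (β : ℝ) (hβ0 : 0 ≤ β) (hβ1 : β ≤ 1)
    (A : Ω → Matrix (Fin n) (Fin n) ℝ)
    (hmeas : ∀ i j, Measurable fun ω => A ω i j)
    (hsymm : ∀ ω, (A ω).IsSymm) (hdiag : ∀ ω i, A ω i i = 0)
    (h01 : ∀ ω i j, A ω i j = 0 ∨ A ω i j = 1)
    (hlattice : ∀ i j : Fin n, i < j → ringLattice n k i j = 1 →
      μ {ω | A ω i j = 1} = ENNReal.ofReal (1 - β + β ^ 2 * k / (n - 1)))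
    (hindep : iIndepFun
      (fun (e : {q : Fin n × Fin n // q.1 < q.2}) ω => A ω e.1.1 e.1.2) μ) :
    ENNReal.ofReal (1 - 1 / (n : ℝ)) ≤
      μ {ω | (1 - β + β ^ 2 * k / (n - 1)) * n * k -
            Real.sqrt ((n : ℝ) * k * Real.log n) ≤
          ∑ i : Fin n, ∑ j : Fin n, ringLattice n k i j * A ω i j} :=
  maxlik_statistic_signal_bound_general μ n k hk hkn hke β hβ1 A hmeas hsymm h01 hlattice hindep
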